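/- Let (g,[·,·],[·,·]') be a compatible Lie algebra and (V,ρ,ρ') a representation of it. Define the skew-symmetric bilinear maps Δ, Δ' on g ⊕ V by Δ((x,u),(y,v)) = ([x,y], ρ(x)v − ρ(y)u) and Δ'((x,u),(y,v)) = ([x,y]', ρ'(x)v − ρ'(y)u), and for a linear map R: V → g let R̂(x,u) = (R(u),0). Then R is a relative Rota–Baxter operator if and only if [[Δ,R̂]_NR, R̂]_NR((0,v),(0,w)) = 0 and [[Δ',R̂]_NR, R̂]_NR((0,v),(0,w)) = 0 for all v, w ∈ V. -/

import Mathlib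

/-- The Nijenhuis–Richardson bracket of a skew-symmetric bilinear map `B` and a linear map
`N`: `[B,N]_NR(a,b) = B(N(a),b) − B(N(b),a) − N(B(a,b))`. -/
def nr2 {W : Type*} [AddCommGroup W] (B : W → W → W) (N : W → W) : W → W → W :=
  fun a b => B (N a) b - B (N b) a - N (B a b)

/-!
Both sides of the equivalence split into one condition per bracket, and for a single bracket
`[[Δ,R̂]_NR,R̂]_NR((0,v),(0,w))` is computed directly: since `R̂ ∘ R̂ = 0` and `R̂` kills `g`,
it equals `([Rv,Rw] − [Rw,Rv] − 2 R(ρ(Rv)w − ρ(Rw)v), 0)`. Skew-symmetry turns the first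
component into twice the defect of the Rota–Baxter identity, and `2` can be cancelled in a
vector space over a field of characteristic zero.
-/

section

variable {K g V : Type*} [CommSemiring K] [AddCommGroup g] [Module K g] [AddCommGroup V]
  [Module K V]

/-- The bracket `Δ` of the semidirect product `g ⋉_ρ V`. -/
def semidirectBracket (B : g →ₗ[K] g →ₗ[K] g) (ρ : g →ₗ[K] Module.End K V) :
    g × V → g × V → g × V :=
  fun p q => (B p.1 q.1, ρ p.1 q.2 - ρ q.1 p.2)

/-- The lift `R̂` of `R`. -/
def liftSnd (R : V →ₗ[K] g) : g × V → g × V :=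
  fun p => (R p.2, 0)

theorem nr2_nr2_semidirectBracket_liftSnd_zero_zero (B : g →ₗ[K] g →ₗ[K] g)
    (ρ : g →ₗ[K] Module.End K V) (R : V →ₗ[K] g) (v w : V) :
    nr2 (nr2 (semidirectBracket B ρ) (liftSnd R)) (liftSnd R) (0, v) (0, w)
      = (B (R v) (R w) - B (R w) (R v) - 2 • R (ρ (R v) w - ρ (R w) v), 0) := by
  simp only [nr2, semidirectBracket, liftSnd, Prod.mk_sub_mk, map_zero, map_sub,
    LinearMap.zero_apply, sub_zero, zero_sub, sub_self]
  congr 1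
  abel

theorem nr2_nr2_semidirectBracket_liftSnd_zero_zero_eq_zero_iff [IsAddTorsionFree g]
    (B : g →ₗ[K] g →ₗ[K] g) (ρ : g →ₗ[K] Module.End K V) (hB : ∀ x y : g, B x y = - B y x)
    (R : V →ₗ[K] g) (v w : V) :
    nr2 (nr2 (semidirectBracket B ρ) (liftSnd R)) (liftSnd R) (0, v) (0, w) = 0
      ↔ B (R v) (R w) = R (ρ (R v) w - ρ (R w) v) := by
  have hdefect : B (R v) (R w) - B (R w) (R v) - 2 • R (ρ (R v) w - ρ (R w) v)
      = 2 • (B (R v) (R w) - R (ρ (R v) w - ρ (R w) v)) := by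
    rw [hB (R w), sub_neg_eq_add, ← two_nsmul, ← nsmul_sub]
  rw [nr2_nr2_semidirectBracket_liftSnd_zero_zero, Prod.mk_eq_zero, hdefect, two_nsmul_eq_zero,
    sub_eq_zero, and_iff_left rfl]

end

theorem stmt_10_general {K : Type*} [Field K] [CharZero K]
    {g V : Type*} [AddCommGroup g] [Module K g] [AddCommGroup V] [Module K V]
    (B B' : g →ₗ[K] g →ₗ[K] g) (ρ ρ' : g →ₗ[K] Module.End K V)
    (hBskew : ∀ x y : g, B x y = - B y x)
    (hB'skew : ∀ x y : g, B' x y = - B' y x)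
    (R : V →ₗ[K] g) :
    ((∀ v w : V, B (R v) (R w) = R (ρ (R v) w - ρ (R w) v)) ∧
     (∀ v w : V, B' (R v) (R w) = R (ρ' (R v) w - ρ' (R w) v)))
    ↔
    ((∀ v w : V,
        nr2 (nr2 (fun p q : g × V => (B p.1 q.1, ρ p.1 q.2 - ρ q.1 p.2))
              (fun p : g × V => (R p.2, 0)))
            (fun p : g × V => (R p.2, 0)) ((0 : g), v) ((0 : g), w) = 0) ∧
     (∀ v w : V,
        nr2 (nr2 (fun p q : g × V => (B' p.1 q.1, ρ' p.1 q.2 - ρ' q.1 p.2))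
              (fun p : g × V => (R p.2, 0)))
            (fun p : g × V => (R p.2, 0)) ((0 : g), v) ((0 : g), w) = 0)) := by
  have : IsAddTorsionFree g := .of_isTorsionFree K g
  exact and_congr
    (forall₂_congr fun v w =>
      (nr2_nr2_semidirectBracket_liftSnd_zero_zero_eq_zero_iff B ρ hBskew R v w).symm)
    (forall₂_congr fun v w =>
      (nr2_nr2_semidirectBracket_liftSnd_zero_zero_eq_zero_iff B' ρ' hB'skew R v w).symm)

/-- for a compatible Lie algebra `(g,B,B')` with representation `(V,ρ,ρ')`, a
linear map `R : V → g` is a relative Rota–Baxter operator iff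
`[[Δ,R̂]_NR,R̂]_NR((0,v),(0,w)) = 0` and `[[Δ',R̂]_NR,R̂]_NR((0,v),(0,w)) = 0` for all
`v, w ∈ V`. -/
theorem stmt_10 {K : Type*} [Field K] [CharZero K]
    {g V : Type*} [AddCommGroup g] [Module K g] [AddCommGroup V] [Module K V]
    (B B' : g →ₗ[K] g →ₗ[K] g) (ρ ρ' : g →ₗ[K] Module.End K V)
    (hBskew : ∀ x y : g, B x y = - B y x)
    (hB'skew : ∀ x y : g, B' x y = - B' y x)
    (hBjac : ∀ x y z : g, B (B x y) z + B (B y z) x + B (B z x) y = 0)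
    (hB'jac : ∀ x y z : g, B' (B' x y) z + B' (B' y z) x + B' (B' z x) y = 0)
    (hcompat : ∀ x y z : g, B (B' x y) z + B' (B x y) z
      = B (B' x z) y + B' (B x z) y + B x (B' y z) + B' x (B y z))
    (hρ : ∀ x y : g, ρ (B x y) = ρ x * ρ y - ρ y * ρ x)
    (hρ' : ∀ x y : g, ρ' (B' x y) = ρ' x * ρ' y - ρ' y * ρ' x)
    (hmix : ∀ x y : g, ρ (B' x y) + ρ' (B x y)
      = ρ x * ρ' y - ρ' y * ρ x + ρ' x * ρ y - ρ y * ρ' x)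
    (R : V →ₗ[K] g) :
    ((∀ v w : V, B (R v) (R w) = R (ρ (R v) w - ρ (R w) v)) ∧
     (∀ v w : V, B' (R v) (R w) = R (ρ' (R v) w - ρ' (R w) v)))
    ↔
    ((∀ v w : V,
        nr2 (nr2 (fun p q : g × V => (B p.1 q.1, ρ p.1 q.2 - ρ q.1 p.2))
              (fun p : g × V => (R p.2, 0)))
            (fun p : g × V => (R p.2, 0)) ((0 : g), v) ((0 : g), w) = 0) ∧
     (∀ v w : V,
        nr2 (nr2 (fun p q : g × V => (B' p.1 q.1, ρ' p.1 q.2 - ρ' q.1 p.2))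
              (fun p : g × V => (R p.2, 0)))
            (fun p : g × V => (R p.2, 0)) ((0 : g), v) ((0 : g), w) = 0)) :=
  stmt_10_general B B' ρ ρ' hBskew hB'skew R
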